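/- Let 1 ≤ p < m ≤ N and let radial u on ℝ^m and w on ℝ^N be related by u(r) = w(t) with r^{-(m-p)/(p-1)} = t^{-(N-p)/(p-1)}. Then ∫_{ℝ^N} |w(y)|^{Np/(N-p)} dy = (ω_{N-1}/ω_{m-1}) · ((m-p)/(N-p)) · ∫_{ℝ^m} |u(x)|^{Np/(N-p)} / |x|^{((N-m)/(N-p))p} dx. -/

import Mathlib

/-!
In polar coordinates the left side is `ω_{N-1} ∫₀^∞ t^(N-1) |w t|^q dt`. The relation between
the radii is `t = r^α` with `α = (m-p)/(N-p)`, and this substitution turns the integral into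
`α ∫₀^∞ r^(αN-1) |u r|^q dr`. Since `αN - 1 = (m-1) - β` for the weight exponent
`β = (N-m)p/(N-p)` of the right side, this is, up to `ω_{m-1}`, the right side in polar
coordinates in `ℝ^m`.
-/

open MeasureTheory Real

/-- `ω_{n-1}`, the area of the unit sphere in `ℝⁿ` (`n` times the volume of the unit ball). -/
noncomputable def unitSphereArea (n : ℕ) : ℝ :=
  n * π ^ ((n : ℝ) / 2) / Gamma (1 + (n : ℝ) / 2)

lemma unitSphereArea_pos (n : ℕ) [NeZero n] : 0 < unitSphereArea n := by
  have hΓ : 0 < Gamma (1 + (n : ℝ) / 2) := Gamma_pos_of_pos (by positivity)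
  have hn : (0 : ℝ) < n := by exact_mod_cast NeZero.pos n
  unfold unitSphereArea
  positivity

lemma EuclideanSpace.measureReal_ball_zero_one (n : ℕ) [NeZero n] :
    volume.real (Metric.ball (0 : EuclideanSpace ℝ (Fin n)) 1)
      = π ^ ((n : ℝ) / 2) / Gamma (1 + (n : ℝ) / 2) := by
  have hΓ : 0 < Gamma ((n : ℝ) / 2 + 1) := Gamma_pos_of_pos (by positivity)
  rw [measureReal_def, EuclideanSpace.volume_ball, Fintype.card_fin, ENNReal.ofReal_one, one_pow,
    one_mul, ENNReal.toReal_ofReal (by positivity), sqrt_eq_rpow, ← rpow_natCast,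
    ← rpow_mul pi_pos.le, add_comm]
  ring_nf

lemma EuclideanSpace.integral_fun_norm (n : ℕ) [NeZero n] (f : ℝ → ℝ) :
    ∫ x : EuclideanSpace ℝ (Fin n), f ‖x‖
      = unitSphereArea n * ∫ t in Set.Ioi 0, t ^ ((n : ℝ) - 1) * f t := by
  have hpow (t : ℝ) : t ^ ((n : ℝ) - 1) = t ^ (n - 1) := by
    rw [← rpow_natCast, Nat.cast_sub NeZero.one_le, Nat.cast_one]
  rw [integral_fun_norm_addHaar, EuclideanSpace.measureReal_ball_zero_one,
    finrank_euclideanSpace_fin, unitSphereArea]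
  simp only [hpow, nsmul_eq_mul, smul_eq_mul]
  ring

lemma integral_rpow_mul_comp_rpow_Ioi (g : ℝ → ℝ) (a : ℝ) {α : ℝ} (hα : α ≠ 0) :
    ∫ t in Set.Ioi 0, t ^ a * g t
      = |α| * ∫ r in Set.Ioi 0, r ^ (α * (a + 1) - 1) * g (r ^ α) := by
  rw [← integral_comp_rpow_Ioi _ hα, ← integral_const_mul]
  refine setIntegral_congr_fun measurableSet_Ioi fun r (hr : 0 < r) => ?_
  rw [smul_eq_mul, ← rpow_mul hr.le, show α * (a + 1) - 1 = (α - 1) + α * a by ring,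
    rpow_add hr]
  ring

lemma dimension_reduction_exponent {m N p : ℝ} (hNp : N - p ≠ 0) :
    (m - p) / (N - p) * ((N - 1) + 1) - 1 = (m - 1) - (N - m) / (N - p) * p := by
  field_simp
  ring

lemma eq_comp_rpow_of_rpow_eq {m N p : ℝ} (hNp : N - p ≠ 0) {u w : ℝ → ℝ}
    (hrel : ∀ r t : ℝ, 0 < r → 0 < t →
      r ^ (-((m - p) / (p - 1))) = t ^ (-((N - p) / (p - 1))) → u r = w t)
    {r : ℝ} (hr : 0 < r) : u r = w (r ^ ((m - p) / (N - p))) := by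
  refine hrel r _ hr (rpow_pos_of_pos hr _) ?_
  rw [← rpow_mul hr.le]
  field_simp

theorem dimension_reduction_critical_norm_general (m N : ℕ) (p : ℝ) (hp : 1 < p)
    (hpm : p < m) (hmN : m ≤ N) (u w : ℝ → ℝ)
    (U : EuclideanSpace ℝ (Fin m) → ℝ) (W : EuclideanSpace ℝ (Fin N) → ℝ)
    (hU : ∀ x, U x = u ‖x‖) (hW : ∀ y, W y = w ‖y‖)
    (hrel : ∀ r t : ℝ, 0 < r → 0 < t →
      r ^ (-(((m : ℝ) - p) / (p - 1))) = t ^ (-(((N : ℝ) - p) / (p - 1))) → u r = w t) :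
    ∫ y : EuclideanSpace ℝ (Fin N), |W y| ^ ((N : ℝ) * p / ((N : ℝ) - p))
      = (((N : ℝ) * π ^ ((N : ℝ) / 2) / Real.Gamma (1 + (N : ℝ) / 2)) /
          ((m : ℝ) * π ^ ((m : ℝ) / 2) / Real.Gamma (1 + (m : ℝ) / 2))) *
        (((m : ℝ) - p) / ((N : ℝ) - p)) *
        ∫ x : EuclideanSpace ℝ (Fin m),
          |U x| ^ ((N : ℝ) * p / ((N : ℝ) - p)) /
            ‖x‖ ^ ((((N : ℝ) - m) / ((N : ℝ) - p)) * p) := by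
  have : NeZero m := ⟨by rintro rfl; norm_num at hpm; linarith⟩
  have : NeZero N := ⟨by rintro rfl; exact NeZero.ne m (Nat.le_zero.mp hmN)⟩
  have hmN' : (m : ℝ) ≤ N := by exact_mod_cast hmN
  have hNp : (N : ℝ) - p ≠ 0 := by linarith
  set q := (N : ℝ) * p / (N - p)
  set β := ((N : ℝ) - m) / (N - p) * p
  set α := ((m : ℝ) - p) / (N - p)
  have hα : 0 < α := div_pos (by linarith) (by linarith)
  have hweight (r : ℝ) (hr : 0 < r) :
      r ^ (α * ((N - 1) + 1) - 1) * |w (r ^ α)| ^ q = r ^ ((m : ℝ) - 1) * (|u r| ^ q / r ^ β) := by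
    rw [← eq_comp_rpow_of_rpow_eq hNp hrel hr, dimension_reduction_exponent hNp, rpow_sub hr]
    ring
  calc ∫ y : EuclideanSpace ℝ (Fin N), |W y| ^ q
      = ∫ y : EuclideanSpace ℝ (Fin N), (fun t => |w t| ^ q) ‖y‖ := by simp_rw [hW]
    _ = unitSphereArea N * (α * ∫ r in Set.Ioi 0, r ^ ((m : ℝ) - 1) * (|u r| ^ q / r ^ β)) := by
      rw [EuclideanSpace.integral_fun_norm N (fun t => |w t| ^ q),
        integral_rpow_mul_comp_rpow_Ioi _ _ hα.ne', abs_of_pos hα,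
        setIntegral_congr_fun measurableSet_Ioi hweight]
    _ = unitSphereArea N / unitSphereArea m * α *
          (unitSphereArea m * ∫ r in Set.Ioi 0, r ^ ((m : ℝ) - 1) * (|u r| ^ q / r ^ β)) := by
      field_simp [(unitSphereArea_pos m).ne']
    _ = unitSphereArea N / unitSphereArea m * α *
          ∫ x : EuclideanSpace ℝ (Fin m), |U x| ^ q / ‖x‖ ^ β := by
      rw [← EuclideanSpace.integral_fun_norm m (fun t => |u t| ^ q / t ^ β)]
      simp_rw [hU]

theorem dimension_reduction_critical_norm (m N : ℕ) (p : ℝ) (hp : 1 < p)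
    (hpm : p < m) (hmN : m ≤ N) (u w : ℝ → ℝ)
    (U : EuclideanSpace ℝ (Fin m) → ℝ) (W : EuclideanSpace ℝ (Fin N) → ℝ)
    (hU : ∀ x, U x = u ‖x‖) (hW : ∀ y, W y = w ‖y‖)
    (hUreg : ContDiff ℝ 1 U) (hUsupp : HasCompactSupport U)
    (hU0 : (0 : EuclideanSpace ℝ (Fin m)) ∉ tsupport U)
    (hrel : ∀ r t : ℝ, 0 < r → 0 < t →
      r ^ (-(((m : ℝ) - p) / (p - 1))) = t ^ (-(((N : ℝ) - p) / (p - 1))) → u r = w t) :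
    ∫ y : EuclideanSpace ℝ (Fin N), |W y| ^ ((N : ℝ) * p / ((N : ℝ) - p))
      = (((N : ℝ) * π ^ ((N : ℝ) / 2) / Real.Gamma (1 + (N : ℝ) / 2)) /
          ((m : ℝ) * π ^ ((m : ℝ) / 2) / Real.Gamma (1 + (m : ℝ) / 2))) *
        (((m : ℝ) - p) / ((N : ℝ) - p)) *
        ∫ x : EuclideanSpace ℝ (Fin m),
          |U x| ^ ((N : ℝ) * p / ((N : ℝ) - p)) /
            ‖x‖ ^ ((((N : ℝ) - m) / ((N : ℝ) - p)) * p) :=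
  dimension_reduction_critical_norm_general m N p hp hpm hmN u w U W hU hW hrel
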